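/- The game {∞̄ | ∞} is the identity of affine normal play: for every affine game G, G + {∞̄ | ∞} is equivalent to G (where equivalence means equal outcomes in all disjunctive sums with games other than ∞ and ∞̄). -/

import Mathlib

inductive AGame : Type
  | inf : AGame
  | binf : AGame
  | node : List AGame → List AGame → AGame

namespace AGame

/-- The affine games: option sets are nonempty (hereditarily). -/
inductive Valid : AGame → Prop
  | inf : Valid .inf
  | binf : Valid .binf
  | node : ∀ {L R : List AGame}, L ≠ [] → R ≠ [] →
      (∀ g ∈ L, Valid g) → (∀ g ∈ R, Valid g) → Valid (.node L R)

/-- Total version of the disjunctive sum (value on the undefined cases `∞ + ∞̄` is junk). -/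
def add' : AGame → AGame → AGame
  | .inf, _ => .inf
  | _, .inf => .inf
  | .binf, _ => .binf
  | _, .binf => .binf
  | .node L R, .node L' R' =>
      .node ((L.attach.map fun x => add' x.1 (.node L' R')) ++
             (L'.attach.map fun y => add' (.node L R) y.1))
            ((R.attach.map fun x => add' x.1 (.node L' R')) ++
             (R'.attach.map fun y => add' (.node L R) y.1))
termination_by G H => sizeOf G + sizeOf H
decreasing_by
  all_goals
    simp_wf
    first
      | (have := List.sizeOf_lt_of_mem x.2; simp_all; omega)
      | (have := List.sizeOf_lt_of_mem y.2; simp_all; omega)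

/-- The disjunctive sum, undefined (`none`) exactly when adding `∞` to `∞̄`. -/
def add : AGame → AGame → Option AGame
  | .inf, .binf => none
  | .binf, .inf => none
  | G, H => some (add' G H)

mutual
/-- `o^L(G) = L` : Left, playing first, wins `G`. -/
def lf : AGame → Bool
  | .inf => true
  | .binf => false
  | .node L _ => L.attach.any fun x => ls x.1
termination_by G => sizeOf G
decreasing_by
  simp_wf; have := List.sizeOf_lt_of_mem x.2; simp_all; omega
/-- `o^R(G) = L` : Left, playing second, wins `G`. -/
def ls : AGame → Bool
  | .inf => true
  | .binf => false
  | .node _ R => R.attach.all fun x => lf x.1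
termination_by G => sizeOf G
decreasing_by
  simp_wf; have := List.sizeOf_lt_of_mem x.2; simp_all; omega
end

/-- The combined outcome `(o^L(G), o^R(G))`, encoded as a pair of booleans
(`true` = Left wins). `(true,true)` is 𝓛, `(true,false)` is 𝓝, `(false,true)` is 𝓟,
`(false,false)` is 𝓡. -/
def outcome (G : AGame) : Bool × Bool := (lf G, ls G)

/-- The partial order of outcomes (componentwise, 𝓛 maximal, 𝓡 minimal, 𝓝 ∥ 𝓟). -/
def OutLE (a b : Bool × Bool) : Prop :=
  (a.1 = true → b.1 = true) ∧ (a.2 = true → b.2 = true)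

/-- `G ≥ H` : replacing `H` by `G` never hurts Left in any disjunctive sum. -/
def GE (G H : AGame) : Prop :=
  ∀ X : AGame, Valid X → X ≠ .inf → X ≠ .binf →
    OutLE (outcome (add' H X)) (outcome (add' G X))

/-- Game equivalence. -/
def Equiv (G H : AGame) : Prop :=
  ∀ X : AGame, Valid X → X ≠ .inf → X ≠ .binf →
    outcome (add' G X) = outcome (add' H X)

/-- The zero game `{∞̄ | ∞}`. -/
def zero : AGame := .node [.binf] [.inf]

/-- The conjugate (players switch roles). -/
def neg : AGame → AGame
  | .inf => .binf
  | .binf => .inf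
  | .node L R =>
      .node (R.attach.map fun x => neg x.1) (L.attach.map fun x => neg x.1)
termination_by G => sizeOf G
decreasing_by
  all_goals
    simp_wf
    (have := List.sizeOf_lt_of_mem x.2; simp_all; omega)


/-- Left option set (empty list for the terminating games). -/
def leftOptions : AGame → List AGame
  | .node L _ => L
  | _ => []

/-- Right option set (empty list for the terminating games). -/
def rightOptions : AGame → List AGame
  | .node _ R => R
  | _ => []

/-- A check: a game having `∞` as a Left option or `∞̄` as a Right option. -/
def IsCheck : AGame → Prop
  | .node L R => .inf ∈ L ∨ .binf ∈ R
  | _ => False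

/-- `Follower H G` : `H` is a follower of `G` (i.e. `G` itself, an option of `G`,
an option of an option, and so on). -/
inductive Follower : AGame → AGame → Prop
  | refl (G : AGame) : Follower G G
  | left {H K : AGame} {L R : List AGame} : K ∈ L → Follower H K → Follower H (.node L R)
  | right {H K : AGame} {L R : List AGame} : K ∈ R → Follower H K → Follower H (.node L R)

/-- A Conway form: distinct from `∞` and `∞̄`, with no checks among its followers. -/
def ConwayForm (G : AGame) : Prop :=
  G ≠ .inf ∧ G ≠ .binf ∧ ∀ H, Follower H G → ¬ IsCheck H

/-- A Conway game: a game equivalent to some Conway form. -/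
def ConwayGame (G : AGame) : Prop :=
  ∃ G', Valid G' ∧ ConwayForm G' ∧ Equiv G G'

/-- `J` is invertible: `J + K = 0` (in the sense of game equivalence) for some affine `K`. -/
def Invertible (J : AGame) : Prop :=
  ∃ K, Valid K ∧ ∃ S, add J K = some S ∧ Equiv S zero

/-- Number forms: the images of the surreal-number Conway forms under the embedding
that replaces an empty option set by `{∞̄}` on the Left and by `{∞}` on the Right.
Every genuine Left option is strictly less than every genuine Right option, and
all genuine options are again number forms. -/
inductive NumForm : AGame → Prop
  | mk {L R : List AGame}
      (hL0 : L ≠ []) (hR0 : R ≠ [])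
      (hLb : .binf ∈ L → L = [.binf]) (hRi : .inf ∈ R → R = [.inf])
      (hLnum : ∀ x ∈ L, x ≠ .binf → NumForm x)
      (hRnum : ∀ y ∈ R, y ≠ .inf → NumForm y)
      (hlt : ∀ x ∈ L, ∀ y ∈ R, x ≠ .binf → y ≠ .inf → GE y x ∧ ¬ GE x y) :
      NumForm (.node L R)

/-- A number: an affine game equal to (the image of) a Conway number form. -/
def IsNumber (G : AGame) : Prop := ∃ n, Valid n ∧ NumForm n ∧ Equiv G n

/-- The pathetic tiny `⧾∞ = {0 | {0 | ∞̄}}`. -/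
def tinyInf : AGame := .node [zero] [.node [zero] [.binf]]

/-- The pathetic miny `⧿∞ = {{∞ | 0} | 0}`. -/
def minyInf : AGame := .node [.node [.inf] [zero]] [zero]

end AGame

/-!
Adding `0 = {∞̄ | ∞}` to `G` only gives Left the extra move to `∞̄` and Right the extra
move to `∞`. Since `∞̄ + X = ∞̄` and `∞ + X = ∞` for non-terminating `X`, these moves
lose at once for the mover in `G + 0 + X`, so they never change who wins; by induction
on `G` and `X`, `G + 0 + X` and `G + X` have the same outcome.
-/

theorem List.any_congr_of_mem {α : Type*} {l : List α} {p q : α → Bool}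
    (h : ∀ a ∈ l, p a = q a) : l.any p = l.any q := by
  rw [Bool.eq_iff_iff, List.any_eq_true, List.any_eq_true]
  exact exists_congr fun a => and_congr_right fun ha => by rw [h a ha]

theorem List.all_congr_of_mem {α : Type*} {l : List α} {p q : α → Bool}
    (h : ∀ a ∈ l, p a = q a) : l.all p = l.all q := by
  rw [Bool.eq_iff_iff, List.all_eq_true, List.all_eq_true]
  exact forall_congr' fun a => imp_congr_right fun ha => by rw [h a ha]

namespace AGame

@[simp] theorem lf_inf : lf .inf = true := by rw [lf]
@[simp] theorem ls_binf : ls .binf = false := by rw [ls]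

theorem lf_node (L R : List AGame) : lf (.node L R) = L.any ls := by rw [lf]; simp
theorem ls_node (L R : List AGame) : ls (.node L R) = R.all lf := by rw [ls]; simp

@[simp] theorem inf_add' (X : AGame) : add' .inf X = .inf := by rw [add']
@[simp] theorem binf_add'_node (L R : List AGame) : add' .binf (.node L R) = .binf := by
  simp [add']
@[simp] theorem node_add'_inf (L R : List AGame) : add' (.node L R) .inf = .inf := by
  simp [add']
@[simp] theorem node_add'_binf (L R : List AGame) : add' (.node L R) .binf = .binf := by
  simp [add']

theorem node_add'_node (L R L' R' : List AGame) :
    add' (.node L R) (.node L' R') =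
      .node (L.map (add' · (.node L' R')) ++ L'.map (add' (.node L R)))
            (R.map (add' · (.node L' R')) ++ R'.map (add' (.node L R))) := by
  rw [add']; simp

theorem node_add'_zero (L R : List AGame) :
    add' (.node L R) zero =
      .node (L.map (add' · zero) ++ [.binf]) (R.map (add' · zero) ++ [.inf]) := by
  simp [zero, node_add'_node]

theorem outcome_add'_zero_add' (G X : AGame) :
    outcome (add' (add' G zero) X) = outcome (add' G X) := by
  match G, X with
  | .inf, _ => simp
  | .binf, _ => simp [zero]
  | .node L R, .inf => simp [node_add'_zero]
  | .node L R, .binf => simp [node_add'_zero]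
  | .node L R, .node L' R' =>
    have hL : ∀ g ∈ L, ls (add' (add' g zero) (.node L' R')) = ls (add' g (.node L' R')) :=
      fun g _ => congrArg Prod.snd (outcome_add'_zero_add' g _)
    have hR : ∀ g ∈ R, lf (add' (add' g zero) (.node L' R')) = lf (add' g (.node L' R')) :=
      fun g _ => congrArg Prod.fst (outcome_add'_zero_add' g _)
    have hL' : ∀ x ∈ L', ls (add' (add' (.node L R) zero) x) = ls (add' (.node L R) x) :=
      fun x _ => congrArg Prod.snd (outcome_add'_zero_add' _ x)
    have hR' : ∀ x ∈ R', lf (add' (add' (.node L R) zero) x) = lf (add' (.node L R) x) :=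
      fun x _ => congrArg Prod.fst (outcome_add'_zero_add' _ x)
    rw [node_add'_zero, node_add'_node, node_add'_node, ← node_add'_zero]
    simp [outcome, lf_node, ls_node, Function.comp_def, List.any_congr_of_mem hL,
      List.any_congr_of_mem hL', List.all_congr_of_mem hR, List.all_congr_of_mem hR']
termination_by sizeOf G + sizeOf X
decreasing_by all_goals (have := List.sizeOf_lt_of_mem ‹_ ∈ _›; simp_all; omega)

/-- The game `{∞̄ | ∞}` is the identity of affine normal play. -/
theorem add_zero_equiv (G : AGame) (hG : Valid G) : Equiv (add' G zero) G :=
  fun X _ _ _ => outcome_add'_zero_add' G X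

end AGame
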